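/- arXiv:2406.07655 — 3 statements merged into one kernel-verified Lean document; each statement's English description precedes it below -/
import Mathlib

section
/- For all positive integers n and d, the number of partitions with perimeter n into d-distinct parts equals the number of partitions with perimeter n into parts congruent to 1 modulo d+1. -/
/-- A partition: a nonempty, nonincreasing list of positive integers. -/
def IsPartition (l : List ℕ) : Prop :=
  l ≠ [] ∧ l.Pairwise (· ≥ ·) ∧ ∀ x ∈ l, 0 < x

/-- Perimeter: (largest part) + (number of parts) - 1. -/
def perimeter (l : List ℕ) : ℕ := l.headI + l.length - 1

/-- d-distinct: consecutive parts differ by at least d. -/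
def DDistinct (d : ℕ) (l : List ℕ) : Prop := l.Chain' (fun x y => y + d ≤ x)

/-!
Read a word `w : List Bool` as a tiling of a strip by tiles of length `1` (`false`) and `d + 1`
(`true`). Starting from the partition `[1]` and applying one step per tile, a tiling builds a
partition into parts `≡ 1 (mod d + 1)` (a short tile appends a part `1`, a long tile adds `d + 1`
to every part) and a `d`-distinct partition (a short tile adds `1` to every part, a long tile adds
`d` to every part and appends a part `1`). Every step raises the perimeter by the length of its
tile. The last step can be read off from whether `1` is a part and then undone, and every partition
of either kind other than `[1]` arises by such a step from one of smaller size. So both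
constructions are bijections from the tilings of length `n - 1` onto the partitions of perimeter
`n` of their kind.
-/

open Function

theorem add_two_le_of_mod_eq_one_mod {b d : ℕ} (hmod : b % (d + 1) = 1 % (d + 1)) (hpos : 0 < b)
    (hb : b ≠ 1) : d + 2 ≤ b := by
  have hdvd : d + 1 ∣ b - 1 := (Nat.modEq_iff_dvd' hpos).1 hmod.symm
  have := Nat.le_of_dvd (by omega) hdvd
  omega

section Partition

variable {l : List ℕ}

theorem isPartition_one : IsPartition [1] := ⟨by simp, by simp, by simp⟩

theorem IsPartition.ne_nil (hl : IsPartition l) : l ≠ [] := hl.1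

theorem IsPartition.map_add (hl : IsPartition l) (c : ℕ) : IsPartition (l.map (· + c)) := by
  obtain ⟨hne, hsorted, hpos⟩ := hl
  refine ⟨by simpa using hne, List.pairwise_map.2 (hsorted.imp fun h => by omega), ?_⟩
  simpa only [List.forall_mem_map] using fun x hx => Nat.lt_add_right c (hpos x hx)

theorem IsPartition.append_one (hl : IsPartition l) : IsPartition (l ++ [1]) := by
  obtain ⟨-, hsorted, hpos⟩ := hl
  refine ⟨by simp, List.pairwise_append.2 ⟨hsorted, by simp, ?_⟩, ?_⟩
  · simpa [Nat.one_le_iff_ne_zero, Nat.pos_iff_ne_zero] using hpos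
  · simpa [or_imp, forall_and] using hpos

theorem IsPartition.of_append_singleton {a : ℕ} (hl : IsPartition (l ++ [a])) (hne : l ≠ []) :
    IsPartition l :=
  ⟨hne, (List.pairwise_append.1 hl.2.1).1, fun x hx => hl.2.2 x (by simp [hx])⟩

theorem IsPartition.le_of_mem_append_singleton {a x : ℕ} (hl : IsPartition (l ++ [a]))
    (hx : x ∈ l ++ [a]) : a ≤ x := by
  rcases List.mem_append.1 hx with hx | hx
  · exact (List.pairwise_append.1 hl.2.1).2.2 x hx a (by simp)
  · simp_all

theorem IsPartition.exists_eq_map_add (hl : IsPartition l) {c : ℕ} (hc : ∀ x ∈ l, c < x) :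
    ∃ l', IsPartition l' ∧ l = l'.map (· + c) := by
  refine ⟨l.map (· - c), ⟨by simpa using hl.ne_nil, ?_, ?_⟩, ?_⟩
  · exact List.pairwise_map.2 (hl.2.1.imp fun h => Nat.sub_le_sub_right h c)
  · simpa only [List.forall_mem_map] using fun x hx => Nat.sub_pos_of_lt (hc x hx)
  · rw [List.map_map]
    conv_lhs => rw [← List.map_id l]
    exact List.map_congr_left fun x hx => (Nat.sub_add_cancel (hc x hx).le).symm

theorem perimeter_map_add (hl : l ≠ []) (c : ℕ) :
    perimeter (l.map (· + c)) = perimeter l + c := by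
  cases l with
  | nil => contradiction
  | cons a l => simp [perimeter]; omega

theorem perimeter_append_singleton (hl : l ≠ []) (a : ℕ) :
    perimeter (l ++ [a]) = perimeter l + 1 := by
  cases l with
  | nil => contradiction
  | cons b l => simp [perimeter]; omega

theorem sum_map_add_const (c : ℕ) : (l.map (· + c)).sum = l.sum + l.length * c := by
  simp [List.sum_map_add]

theorem dDistinct_iff_pairwise {d : ℕ} : DDistinct d l ↔ l.Pairwise (fun x y => y + d ≤ x) :=
  haveI : Trans (fun x y : ℕ => y + d ≤ x) (fun x y => y + d ≤ x) (fun x y => y + d ≤ x) :=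
    ⟨fun h₁ h₂ => by omega⟩
  List.isChain_iff_pairwise

theorem dDistinct_map_add_iff {d : ℕ} (c : ℕ) : DDistinct d (l.map (· + c)) ↔ DDistinct d l := by
  simp [dDistinct_iff_pairwise, List.pairwise_map, Nat.add_right_comm _ c d]

theorem dDistinct_append_singleton_iff {d a : ℕ} :
    DDistinct d (l ++ [a]) ↔ DDistinct d l ∧ ∀ x ∈ l, a + d ≤ x := by
  simp [dDistinct_iff_pairwise, List.pairwise_append]

end Partition

def tilingLength (d : ℕ) : List Bool → ℕ
  | [] => 0
  | false :: w => tilingLength d w + 1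
  | true :: w => tilingLength d w + (d + 1)

def modPartitionOfTiling (d : ℕ) : List Bool → List ℕ
  | [] => [1]
  | false :: w => modPartitionOfTiling d w ++ [1]
  | true :: w => (modPartitionOfTiling d w).map (· + (d + 1))

def distinctPartitionOfTiling (d : ℕ) : List Bool → List ℕ
  | [] => [1]
  | false :: w => (distinctPartitionOfTiling d w).map (· + 1)
  | true :: w => (distinctPartitionOfTiling d w).map (· + d) ++ [1]

section Tiling

variable (d : ℕ)

theorem injective_of_perimeter_of_cons_inj {f : List Bool → List ℕ}
    (hper : ∀ w, perimeter (f w) = tilingLength d w + 1)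
    (hcons : ∀ b b' w w', f (b :: w) = f (b' :: w') → b = b' ∧ f w = f w') : Injective f := by
  have hne : ∀ b w, f [] ≠ f (b :: w) := fun b w h => by
    have := congrArg perimeter h
    cases b <;> simp [hper, tilingLength] at this
  intro w₁
  induction w₁ with
  | nil => rintro (_ | ⟨b, w⟩) h; exacts [rfl, absurd h (hne b w)]
  | cons b₁ w₁ ih =>
    rintro (_ | ⟨b₂, w₂⟩) h
    · exact absurd h.symm (hne b₁ w₁)
    · obtain ⟨rfl, hw⟩ := hcons _ _ _ _ h
      rw [ih hw]

theorem card_perimeter_eq_card_tilings {f : List Bool → List ℕ} {P : List ℕ → Prop}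
    (hf : Injective f) (hper : ∀ w, perimeter (f w) = tilingLength d w + 1)
    (hmaps : ∀ w, IsPartition (f w) ∧ P (f w))
    (hsurj : ∀ l, IsPartition l → P l → ∃ w, f w = l) (n : ℕ) :
    Nat.card {l : List ℕ // IsPartition l ∧ perimeter l = n ∧ P l}
      = Nat.card {w : List Bool // tilingLength d w + 1 = n} := by
  have hbij : Set.BijOn f {w | tilingLength d w + 1 = n}
      {l | IsPartition l ∧ perimeter l = n ∧ P l} := by
    refine ⟨fun w hw => ⟨(hmaps w).1, (hper w).trans hw, (hmaps w).2⟩, hf.injOn, ?_⟩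
    rintro l ⟨hl, rfl, hP⟩
    obtain ⟨w, rfl⟩ := hsurj l hl hP
    exact ⟨w, (hper w).symm, rfl⟩
  exact (Nat.card_congr (hbij.equiv f)).symm

theorem isPartition_modPartitionOfTiling (w : List Bool) :
    IsPartition (modPartitionOfTiling d w) := by
  induction w with
  | nil => exact isPartition_one
  | cons b w ih => cases b; exacts [ih.append_one, ih.map_add _]

theorem perimeter_modPartitionOfTiling (w : List Bool) :
    perimeter (modPartitionOfTiling d w) = tilingLength d w + 1 := by
  induction w with
  | nil => rfl
  | cons b w ih =>
    have hne := (isPartition_modPartitionOfTiling d w).ne_nil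
    cases b <;> simp only [modPartitionOfTiling, tilingLength, perimeter_append_singleton hne,
      perimeter_map_add hne, ih]
    ring

theorem mod_of_mem_modPartitionOfTiling (w : List Bool) :
    ∀ x ∈ modPartitionOfTiling d w, x % (d + 1) = 1 % (d + 1) := by
  induction w with
  | nil => simp [modPartitionOfTiling]
  | cons b w ih => cases b <;> simpa [modPartitionOfTiling, or_imp, forall_and] using ih

theorem one_mem_modPartitionOfTiling_cons (b : Bool) (w : List Bool) :
    1 ∈ modPartitionOfTiling d (b :: w) ↔ b = false := by
  cases b
  · simp [modPartitionOfTiling]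
  · simpa [modPartitionOfTiling] using fun x hx h =>
      absurd ((isPartition_modPartitionOfTiling d w).2.2 x hx) (by omega)

theorem modPartitionOfTiling_injective : Injective (modPartitionOfTiling d) := by
  refine injective_of_perimeter_of_cons_inj d (perimeter_modPartitionOfTiling d) ?_
  intro b b' w w' h
  obtain rfl : b = b' := by
    have := (one_mem_modPartitionOfTiling_cons d b w).symm.trans
      (h ▸ one_mem_modPartitionOfTiling_cons d b' w')
    cases b <;> cases b' <;> simp_all
  cases b
  · exact ⟨rfl, List.append_cancel_right h⟩
  · exact ⟨rfl, List.map_injective_iff.2 (add_left_injective _) h⟩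

theorem exists_modPartitionOfTiling_eq {l : List ℕ} (hl : IsPartition l)
    (hmod : ∀ x ∈ l, x % (d + 1) = 1 % (d + 1)) : ∃ w, modPartitionOfTiling d w = l := by
  induction hs : l.sum using Nat.strong_induction_on generalizing l with
  | _ s ih =>
    obtain ⟨L, b, rfl⟩ : ∃ L b, l = L ++ [b] :=
      ⟨_, _, (List.dropLast_append_getLast hl.ne_nil).symm⟩
    by_cases hb : b = 1
    · subst hb
      rcases eq_or_ne L [] with rfl | hL
      · exact ⟨[], rfl⟩
      obtain ⟨w, rfl⟩ := ih L.sum (by simp [← hs]) (hl.of_append_singleton hL)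
        (fun x hx => hmod x (by simp [hx])) rfl
      exact ⟨false :: w, rfl⟩
    · have hbig := add_two_le_of_mod_eq_one_mod (hmod b (by simp)) (hl.2.2 b (by simp)) hb
      obtain ⟨l', hl', hll'⟩ := hl.exists_eq_map_add (c := d + 1)
        fun x hx => by have := hl.le_of_mem_append_singleton hx; omega
      rw [hll'] at hmod hs ⊢
      have hlt : l'.sum < s := by
        rw [← hs, sum_map_add_const]
        exact Nat.lt_add_of_pos_right (Nat.mul_pos (List.length_pos_iff.2 hl'.ne_nil) d.succ_pos)
      obtain ⟨w, rfl⟩ := ih l'.sum hlt hl' (by simpa using hmod) rfl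
      exact ⟨true :: w, rfl⟩

theorem isPartition_distinctPartitionOfTiling (w : List Bool) :
    IsPartition (distinctPartitionOfTiling d w) := by
  induction w with
  | nil => exact isPartition_one
  | cons b w ih => cases b; exacts [ih.map_add _, (ih.map_add _).append_one]

theorem perimeter_distinctPartitionOfTiling (w : List Bool) :
    perimeter (distinctPartitionOfTiling d w) = tilingLength d w + 1 := by
  induction w with
  | nil => rfl
  | cons b w ih =>
    have hw := isPartition_distinctPartitionOfTiling d w
    cases b <;> simp only [distinctPartitionOfTiling, tilingLength,
      perimeter_append_singleton (hw.map_add d).ne_nil, perimeter_map_add hw.ne_nil, ih]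
    all_goals ring

theorem dDistinct_distinctPartitionOfTiling (w : List Bool) :
    DDistinct d (distinctPartitionOfTiling d w) := by
  induction w with
  | nil => exact dDistinct_iff_pairwise.2 (List.pairwise_singleton _ _)
  | cons b w ih =>
    cases b
    · exact (dDistinct_map_add_iff 1).2 ih
    · refine dDistinct_append_singleton_iff.2 ⟨(dDistinct_map_add_iff d).2 ih, ?_⟩
      simpa [add_comm 1 d] using (isPartition_distinctPartitionOfTiling d w).2.2

theorem one_mem_distinctPartitionOfTiling_cons (b : Bool) (w : List Bool) :
    1 ∈ distinctPartitionOfTiling d (b :: w) ↔ b = true := by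
  cases b
  · simpa [distinctPartitionOfTiling] using fun h =>
      lt_irrefl 0 ((isPartition_distinctPartitionOfTiling d w).2.2 0 h)
  · simp [distinctPartitionOfTiling]

theorem distinctPartitionOfTiling_injective : Injective (distinctPartitionOfTiling d) := by
  refine injective_of_perimeter_of_cons_inj d (perimeter_distinctPartitionOfTiling d) ?_
  intro b b' w w' h
  obtain rfl : b = b' := by
    have := (one_mem_distinctPartitionOfTiling_cons d b w).symm.trans
      (h ▸ one_mem_distinctPartitionOfTiling_cons d b' w')
    cases b <;> cases b' <;> simp_all
  cases b
  · exact ⟨rfl, List.map_injective_iff.2 (add_left_injective _) h⟩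
  · exact ⟨rfl, List.map_injective_iff.2 (add_left_injective _) (List.append_cancel_right h)⟩

theorem exists_distinctPartitionOfTiling_eq {l : List ℕ} (hl : IsPartition l)
    (hdist : DDistinct d l) : ∃ w, distinctPartitionOfTiling d w = l := by
  induction hs : l.sum using Nat.strong_induction_on generalizing l with
  | _ s ih =>
    obtain ⟨L, b, rfl⟩ : ∃ L b, l = L ++ [b] :=
      ⟨_, _, (List.dropLast_append_getLast hl.ne_nil).symm⟩
    by_cases hb : b = 1
    · subst hb
      rcases eq_or_ne L [] with rfl | hL
      · exact ⟨[], rfl⟩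
      obtain ⟨hdist, hgt⟩ := dDistinct_append_singleton_iff.1 hdist
      obtain ⟨L', hL', rfl⟩ := (hl.of_append_singleton hL).exists_eq_map_add (c := d)
        fun x hx => by have := hgt x hx; omega
      obtain ⟨w, rfl⟩ := ih L'.sum (by simp [← hs]) hL'
        ((dDistinct_map_add_iff d).1 hdist) rfl
      exact ⟨true :: w, rfl⟩
    · obtain ⟨l', hl', hll'⟩ := hl.exists_eq_map_add (c := 1)
        fun x hx => by have := hl.le_of_mem_append_singleton hx; have := hl.2.2 b (by simp); omega
      rw [hll'] at hdist hs ⊢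
      have hlen := List.length_pos_iff.2 hl'.ne_nil
      obtain ⟨w, rfl⟩ := ih l'.sum (by rw [← hs, sum_map_add_const]; omega) hl'
        ((dDistinct_map_add_iff 1).1 hdist) rfl
      exact ⟨false :: w, rfl⟩

end Tiling

theorem stmt2_general (n d : ℕ) :
    Nat.card {l : List ℕ // IsPartition l ∧ perimeter l = n ∧ DDistinct d l}
      = Nat.card {l : List ℕ // IsPartition l ∧ perimeter l = n ∧
          ∀ x ∈ l, x % (d + 1) = 1 % (d + 1)} := by
  have hdistinct := card_perimeter_eq_card_tilings d (distinctPartitionOfTiling_injective d)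
    (perimeter_distinctPartitionOfTiling d)
    (fun w => ⟨isPartition_distinctPartitionOfTiling d w, dDistinct_distinctPartitionOfTiling d w⟩)
    (fun _ => exists_distinctPartitionOfTiling_eq d) n
  have hmod := card_perimeter_eq_card_tilings d (modPartitionOfTiling_injective d)
    (perimeter_modPartitionOfTiling d)
    (fun w => ⟨isPartition_modPartitionOfTiling d w, mod_of_mem_modPartitionOfTiling d w⟩)
    (fun _ => exists_modPartitionOfTiling_eq d) n
  rw [hdistinct, hmod]

theorem stmt2 (n d : ℕ) (hn : 0 < n) (hd : 0 < d) :
    Nat.card {l : List ℕ // IsPartition l ∧ perimeter l = n ∧ DDistinct d l}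
      = Nat.card {l : List ℕ // IsPartition l ∧ perimeter l = n ∧
          ∀ x ∈ l, x % (d + 1) = 1 % (d + 1)} :=
  stmt2_general n d
end

section
/- For positive integers n and k, the number of partitions with perimeter n into 1-distinct (strictly decreasing) parts having exactly k parts equals the binomial coefficient C(n-k, k-1). -/
/-!
Since the perimeter of a partition with `k` parts is `a + k - 1` for its largest part `a`, every
partition counted has largest part `n - k + 1`. Deleting it leaves a strictly decreasing list of
`k - 1` parts below `n - k + 1`, i.e. a `(k - 1)`-subset of `{1, …, n - k}` listed in decreasing
order, and every such subset arises exactly once.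
-/

open Finset

theorem List.sortedGT_cons_iff {α : Type*} [Preorder α] {a : α} {t : List α} :
    (a :: t).SortedGT ↔ (∀ x ∈ t, x < a) ∧ t.SortedGT := by
  simp only [List.sortedGT_iff_pairwise, List.pairwise_cons, gt_iff_lt]

theorem Finset.natCard_setOf_sortedGT_eq_choose {α : Type*} [LinearOrder α] (s : Finset α) (m : ℕ) :
    Nat.card {t : List α | t.SortedGT ∧ (∀ x ∈ t, x ∈ s) ∧ t.length = m} = s.card.choose m := by
  have hsort : {t : List α | t.SortedGT ∧ (∀ x ∈ t, x ∈ s) ∧ t.length = m} =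
      (fun u : Finset α => u.sort (· ≥ ·)) '' ↑(powersetCard m s) := by
    ext t
    constructor
    · rintro ⟨ht, hts, rfl⟩
      refine ⟨t.toFinset, mem_powersetCard.2 ⟨fun x hx => hts x (List.mem_toFinset.1 hx), ?_⟩, ?_⟩
      · exact List.toFinset_card_of_nodup ht.nodup
      · exact (List.toFinset_sort _ ht.nodup).2 ht.sortedGE.pairwise
    · rintro ⟨u, hu, rfl⟩
      obtain ⟨hus, rfl⟩ := mem_powersetCard.1 hu
      exact ⟨sortedGT_sort u, fun x hx => hus ((mem_sort _).1 hx), length_sort _⟩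
  have hinj : Function.Injective fun u : Finset α => u.sort (· ≥ ·) :=
    Function.LeftInverse.injective fun u => sort_toFinset u _
  rw [hsort, Nat.card_image_of_injective hinj, Nat.card_coe_set_eq, Set.ncard_coe_finset,
    card_powersetCard]

theorem dDistinct_one_iff_sortedGT {l : List ℕ} : DDistinct 1 l ↔ l.SortedGT :=
  List.sortedGT_iff_isChain.symm

theorem isPartition_iff_of_sortedGT {l : List ℕ} (hl : l.SortedGT) :
    IsPartition l ↔ l ≠ [] ∧ ∀ x ∈ l, 0 < x := by
  simp only [IsPartition, hl.sortedGE.pairwise, true_and]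

theorem perimeter_cons (a : ℕ) (t : List ℕ) : perimeter (a :: t) = a + t.length := by
  simp [perimeter]

theorem distinct_perimeter_partition_iff {n k : ℕ} (hn : 0 < n) (hk : 0 < k) {l : List ℕ} :
    (IsPartition l ∧ perimeter l = n ∧ DDistinct 1 l ∧ l.length = k) ↔
      ∃ t : List ℕ, (t.SortedGT ∧ (∀ x ∈ t, x ∈ Ico 1 (n - k + 1)) ∧ t.length = k - 1) ∧
        (n - k + 1) :: t = l := by
  simp only [dDistinct_one_iff_sortedGT, mem_Ico]
  constructor
  · rintro ⟨hpart, hper, hdec, hlen⟩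
    obtain ⟨hne, hpos⟩ := (isPartition_iff_of_sortedGT hdec).1 hpart
    obtain ⟨a, t, rfl⟩ := List.exists_cons_of_ne_nil hne
    obtain ⟨hlt, ht⟩ := List.sortedGT_cons_iff.1 hdec
    rw [perimeter_cons] at hper
    rw [List.length_cons] at hlen
    have ha : a = n - k + 1 := by have := hpos a List.mem_cons_self; omega
    subst ha
    exact ⟨t, ⟨ht, fun x hx => ⟨hpos x (List.mem_cons_of_mem _ hx), hlt x hx⟩, by omega⟩, rfl⟩
  · rintro ⟨t, ⟨ht, hbound, hlen⟩, rfl⟩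
    have hkn : k ≤ n := by
      cases t with
      | nil => rw [List.length_nil] at hlen; omega
      | cons x _ => have := hbound x List.mem_cons_self; omega
    have hdec : ((n - k + 1) :: t).SortedGT :=
      List.sortedGT_cons_iff.2 ⟨fun x hx => (hbound x hx).2, ht⟩
    refine ⟨(isPartition_iff_of_sortedGT hdec).2 ⟨List.cons_ne_nil _ _, ?_⟩, ?_, hdec, ?_⟩
    · simp only [List.mem_cons, forall_eq_or_imp]
      exact ⟨Nat.succ_pos _, fun x hx => (hbound x hx).1⟩
    · rw [perimeter_cons]; omega
    · rw [List.length_cons]; omega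

theorem stmt3 (n k : ℕ) (hn : 0 < n) (hk : 0 < k) :
    Nat.card {l : List ℕ // IsPartition l ∧ perimeter l = n ∧ DDistinct 1 l ∧ l.length = k}
      = Nat.choose (n - k) (k - 1) := by
  have hset : {l : List ℕ | IsPartition l ∧ perimeter l = n ∧ DDistinct 1 l ∧ l.length = k} =
      List.cons (n - k + 1) ''
        {t | t.SortedGT ∧ (∀ x ∈ t, x ∈ Ico 1 (n - k + 1)) ∧ t.length = k - 1} :=
    Set.ext fun _ => distinct_perimeter_partition_iff hn hk
  change Nat.card {l : List ℕ | _} = _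
  rw [hset, Nat.card_image_of_injective List.cons_injective,
    Finset.natCard_setOf_sortedGT_eq_choose, Nat.card_Ico, Nat.add_sub_cancel]
end

section
/- For positive integers n and odd d, the number of partitions with perimeter n into d-distinct parts all ≥ (d+3)/2 is at least the number of partitions with perimeter n into parts congruent to ±(d+3)/2 modulo d+3. -/
/-!
Write a part `x ≡ a (mod m)` with `a ≤ x` as `x = a + m c` and call `c` its level. If the largest
part of such a partition has level `t` and there are `k` parts, the perimeter is
`n = a + m t + k - 1`. Send it to the partition with `t + 1` parts whose first part is `n - t` and
whose `j`-th part (`1 ≤ j ≤ t`) is `a + (t - j) d` plus the number of non-largest parts of level at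
least `j`. Consecutive parts differ by at least `d` (for the first gap because `d < m`), every part
is at least `a`, the perimeter is again `n`, and the image determines `t`, `k` and all the level
counts, hence the partition. For odd `d` and `m = d + 3 = 2 a`, the classes `±a (mod m)` coincide
and consist exactly of the numbers `a + m c`.
-/

lemma List.countP_le_eq_count_add_countP (L : List ℕ) (j : ℕ) :
    L.countP (fun x => j ≤ x) = L.count j + L.countP (fun x => j + 1 ≤ x) := by
  induction L with
  | nil => rfl
  | cons x L ih =>
    simp only [List.countP_cons, List.count_cons, ih, decide_eq_true_eq, beq_iff_eq]
    split_ifs <;> omega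

lemma List.perm_of_countP_le_eq {L L' : List ℕ}
    (h : ∀ j, L.countP (fun x => j ≤ x) = L'.countP (fun x => j ≤ x)) : L.Perm L' := by
  refine List.perm_iff_count.mpr fun j => ?_
  have hj := h j
  have hj' := h (j + 1)
  rw [L.countP_le_eq_count_add_countP, L'.countP_le_eq_count_add_countP] at hj
  omega

lemma List.le_headI_of_pairwise_ge {α : Type*} [Preorder α] [Inhabited α] {l : List α}
    (hl : l.Pairwise (· ≥ ·)) :
    ∀ x ∈ l, x ≤ l.headI := by
  cases l with
  | nil => simp
  | cons y l =>
    simp only [List.mem_cons, List.headI_cons, forall_eq_or_imp, le_refl, true_and]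
    exact (List.pairwise_cons.mp hl).1

namespace IsPartition

variable {l : List ℕ}

lemma headI_mem (hl : IsPartition l) : l.headI ∈ l := by
  obtain ⟨hne, -, -⟩ := hl
  cases l with
  | nil => exact absurd rfl hne
  | cons x l => exact List.mem_cons_self

lemma length_pos (hl : IsPartition l) : 0 < l.length := List.length_pos_iff.mpr hl.1

lemma headI_pos (hl : IsPartition l) : 0 < l.headI := hl.2.2 _ hl.headI_mem

lemma le_headI (hl : IsPartition l) : ∀ x ∈ l, x ≤ l.headI := List.le_headI_of_pairwise_ge hl.2.1

end IsPartition

lemma finite_setOf_isPartition_perimeter (n : ℕ) :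
    {l : List ℕ | IsPartition l ∧ perimeter l = n}.Finite := by
  refine ((List.finite_length_le (Fin (n + 1)) n).image (List.map Fin.val)).subset ?_
  rintro l ⟨hl, hper⟩
  have hhead := hl.headI_pos
  have hlen := hl.length_pos
  unfold perimeter at hper
  lift l to List (Fin (n + 1)) using fun x hx => by
    have := hl.le_headI x hx
    omega
  exact ⟨l, by simp at hlen hper ⊢; omega, rfl⟩

def level (a m x : ℕ) : ℕ := (x - a) / m

lemma level_add_mul {a m : ℕ} (hm : 0 < m) (c : ℕ) : level a m (a + m * c) = c := by
  simp [level, hm]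

lemma level_mono (a m : ℕ) {x y : ℕ} (h : x ≤ y) : level a m x ≤ level a m y :=
  Nat.div_le_div_right (Nat.sub_le_sub_right h a)

lemma mul_level_le (a m x : ℕ) : m * level a m x ≤ x - a := Nat.mul_div_le _ _

lemma level_le (a m x : ℕ) : level a m x ≤ x := (Nat.div_le_self _ _).trans (Nat.sub_le _ _)

lemma level_headI_le_perimeter (a m : ℕ) (l : List ℕ) : level a m l.headI ≤ perimeter l := by
  cases l with
  | nil => simp [level]
  | cons x l =>
    have := level_le a m x
    simp only [perimeter, List.headI_cons, List.length_cons]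
    omega

lemma eq_add_mul_level {a m x : ℕ} (hm : 0 < m) (hx : ∃ c, x = a + m * c) :
    x = a + m * level a m x := by
  obtain ⟨c, rfl⟩ := hx
  rw [level_add_mul hm]

lemma perm_of_countP_level_le_eq {a m : ℕ} (hm : 0 < m) {L L' : List ℕ}
    (hL : ∀ x ∈ L, ∃ c, x = a + m * c) (hL' : ∀ x ∈ L', ∃ c, x = a + m * c)
    (h : ∀ j, L.countP (fun x => j ≤ level a m x) = L'.countP (fun x => j ≤ level a m x)) :
    L.Perm L' := by
  have hmap : ∀ {L : List ℕ}, (∀ x ∈ L, ∃ c, x = a + m * c) →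
      (L.map (level a m)).map (a + m * ·) = L := fun hL => by
    rw [List.map_map]
    exact (List.map_congr_left fun x hx => (eq_add_mul_level hm (hL x hx)).symm).trans
      (List.map_id _)
  rw [← hmap hL, ← hmap hL']
  refine (List.perm_of_countP_le_eq fun j => ?_).map _
  simpa only [List.countP_map, Function.comp_def] using h j

def distinctPart (d a m : ℕ) (l : List ℕ) (j : ℕ) : ℕ :=
  if j = 0 then perimeter l - level a m l.headI
  else a + (level a m l.headI - j) * d + l.tail.countP (fun x => j ≤ level a m x)

def toDDistinct (d a m : ℕ) (l : List ℕ) : List ℕ :=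
  (List.range (level a m l.headI + 1)).map (distinctPart d a m l)

section toDDistinct

variable {d a m : ℕ} {l : List ℕ}

lemma length_toDDistinct : (toDDistinct d a m l).length = level a m l.headI + 1 := by
  simp [toDDistinct]

lemma headI_toDDistinct : (toDDistinct d a m l).headI = perimeter l - level a m l.headI := by
  simp [toDDistinct, List.range_succ_eq_map, distinctPart]

lemma perimeter_toDDistinct : perimeter (toDDistinct d a m l) = perimeter l := by
  have := level_headI_le_perimeter a m l
  rw [perimeter, headI_toDDistinct, length_toDDistinct]
  omega

lemma dDistinct_toDDistinct (hdm : d < m) (l : List ℕ) : DDistinct d (toDDistinct d a m l) := by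
  change List.IsChain _ ((List.range _).map _)
  rw [List.isChain_map, List.isChain_range_succ]
  intro j hj
  simp only [distinctPart, Nat.succ_eq_add_one, Nat.add_one_ne_zero, if_false]
  set t := level a m l.headI
  rcases Nat.eq_zero_or_pos j with rfl | hj0
  · have hlen : 0 < l.length := by
      rcases l with _ | ⟨x, l⟩
      · simp [t, level] at hj
      · simp
    have hcount : l.tail.countP (fun x => 1 ≤ level a m x) ≤ l.length - 1 :=
      List.length_tail ▸ List.countP_le_length
    have hmt : m * t ≤ l.headI - a := mul_level_le a m l.headI
    have htd : t * d + t ≤ m * t := by nlinarith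
    have hshift : (t - 1) * d + d = t * d := by
      rw [← Nat.succ_mul, Nat.succ_eq_add_one, Nat.sub_add_cancel hj]
    simp only [perimeter, zero_add, if_true]
    omega
  · have hmono : l.tail.countP (fun x => j + 1 ≤ level a m x) ≤
        l.tail.countP (fun x => j ≤ level a m x) :=
      List.countP_mono_left fun x _ hx => by simp only [decide_eq_true_eq] at hx ⊢; omega
    have hshift : (t - (j + 1)) * d + d = (t - j) * d := by
      rw [← Nat.succ_mul, Nat.succ_eq_add_one, Nat.sub_add_eq, Nat.sub_add_cancel (by omega)]
    simp only [hj0.ne', if_false]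
    omega

lemma le_of_mem_toDDistinct (hm : 0 < m) (hl : l ≠ []) (hal : a ≤ l.headI) :
    ∀ x ∈ toDDistinct d a m l, a ≤ x := by
  simp only [toDDistinct, List.mem_map, List.mem_range]
  rintro _ ⟨j, -, rfl⟩
  rcases eq_or_ne j 0 with rfl | hj0
  · have hlen : 0 < l.length := List.length_pos_iff.mpr hl
    have hmt := mul_level_le a m l.headI
    have : level a m l.headI ≤ m * level a m l.headI := Nat.le_mul_of_pos_left _ hm
    simp only [distinctPart, perimeter, if_true]
    omega
  · simp only [distinctPart, hj0, if_false]
    omega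

lemma isPartition_toDDistinct (ha : 0 < a) (hdm : d < m) (hl : l ≠ []) (hal : a ≤ l.headI) :
    IsPartition (toDDistinct d a m l) := by
  refine ⟨List.ne_nil_of_length_pos (by simp [length_toDDistinct]), ?_, fun x hx => ?_⟩
  · exact List.isChain_iff_pairwise.mp ((dDistinct_toDDistinct hdm l).imp fun _ _ h => by omega)
  · exact ha.trans_le (le_of_mem_toDDistinct (by omega) hl hal x hx)

end toDDistinct

section injectivity

variable {d a m : ℕ} {l l' : List ℕ}

lemma countP_level_tail_eq_of_toDDistinct_eq (hl : IsPartition l) (hl' : IsPartition l')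
    (hlen : l.length = l'.length) (ht : level a m l'.headI = level a m l.headI)
    (heq : toDDistinct d a m l = toDDistinct d a m l') (j : ℕ) :
    l.tail.countP (fun x => j ≤ level a m x) = l'.tail.countP (fun x => j ≤ level a m x) := by
  rcases Nat.eq_zero_or_pos j with rfl | hj0
  · simp [hlen]
  rcases Nat.lt_or_ge (level a m l.headI) j with htj | hjt
  · have hzero : ∀ {L : List ℕ}, IsPartition L → level a m L.headI = level a m l.headI →
        L.tail.countP (fun x => j ≤ level a m x) = 0 := fun hL hLt =>
      List.countP_eq_zero.mpr fun x hx => by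
        have := level_mono a m (hL.le_headI x (List.mem_of_mem_tail hx))
        simp only [decide_eq_true_eq]
        omega
    rw [hzero hl rfl, hzero hl' ht]
  · rw [toDDistinct, toDDistinct, ht, List.map_inj_left] at heq
    have hpart := heq j (List.mem_range.mpr (by omega))
    simp only [distinctPart, hj0.ne', if_false, ht] at hpart
    omega

lemma toDDistinct_injOn (hm : 0 < m) :
    Set.InjOn (toDDistinct d a m) {l | IsPartition l ∧ ∀ x ∈ l, ∃ c, x = a + m * c} := by
  rintro l ⟨hl, hform⟩ l' ⟨hl', hform'⟩ heq
  have ht : level a m l'.headI = level a m l.headI := by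
    simpa [length_toDDistinct] using congrArg List.length heq.symm
  have hhead : l.headI = l'.headI := by
    rw [eq_add_mul_level hm (hform _ hl.headI_mem),
      eq_add_mul_level hm (hform' _ hl'.headI_mem), ht]
  have hlen : l.length = l'.length := by
    have hper : perimeter l = perimeter l' := by
      rw [← perimeter_toDDistinct (d := d) (a := a) (m := m), heq, perimeter_toDDistinct]
    have := hl.length_pos
    have := hl'.length_pos
    unfold perimeter at hper
    omega
  have htail : l.tail = l'.tail :=
    (perm_of_countP_level_le_eq hm (fun x hx => hform x (List.mem_of_mem_tail hx))
      (fun x hx => hform' x (List.mem_of_mem_tail hx))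
      (countP_level_tail_eq_of_toDDistinct_eq hl hl' hlen ht heq)).eq_of_sortedGE
      hl.2.1.tail.sortedGE hl'.2.1.tail.sortedGE
  cases l with
  | nil => exact absurd rfl hl.1
  | cons x l =>
    cases l' with
    | nil => exact absurd rfl hl'.1
    | cons x' l' =>
      simp only [List.headI_cons] at hhead
      simp only [List.tail_cons] at htail
      rw [hhead, htail]

end injectivity

theorem card_le_card_dDistinct {n d a m : ℕ} (ha : 0 < a) (hdm : d < m) :
    Nat.card {l : List ℕ // IsPartition l ∧ perimeter l = n ∧ ∀ x ∈ l, ∃ c, x = a + m * c} ≤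
      Nat.card {l : List ℕ // IsPartition l ∧ perimeter l = n ∧ DDistinct d l ∧
        ∀ x ∈ l, a ≤ x} := by
  have hm : 0 < m := by omega
  have : Finite {l : List ℕ // IsPartition l ∧ perimeter l = n ∧ DDistinct d l ∧
      ∀ x ∈ l, a ≤ x} :=
    ((finite_setOf_isPartition_perimeter n).subset fun l hl => ⟨hl.1, hl.2.1⟩).to_subtype
  have hal : ∀ {l : List ℕ}, IsPartition l → (∀ x ∈ l, ∃ c, x = a + m * c) → a ≤ l.headI :=
    fun hl hform => by
      obtain ⟨c, hc⟩ := hform _ hl.headI_mem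
      omega
  refine Nat.card_le_card_of_injective
    (fun l => ⟨toDDistinct d a m l, isPartition_toDDistinct ha hdm l.2.1.1 (hal l.2.1 l.2.2.2),
      perimeter_toDDistinct.trans l.2.2.1, dDistinct_toDDistinct hdm l,
      le_of_mem_toDDistinct hm l.2.1.1 (hal l.2.1 l.2.2.2)⟩) ?_
  intro l l' h
  exact Subtype.ext <|
    toDDistinct_injOn hm ⟨l.2.1, l.2.2.2⟩ ⟨l'.2.1, l'.2.2.2⟩ (congrArg Subtype.val h)

lemma mod_two_mul_eq_or_add_mod_eq_zero_iff {a x : ℕ} (ha : 0 < a) :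
    x % (2 * a) = a % (2 * a) ∨ (x + a) % (2 * a) = 0 ↔ ∃ c, x = a + 2 * a * c := by
  have ham : a % (2 * a) = a := Nat.mod_eq_of_lt (by omega)
  constructor
  · rintro (h | h)
    · have := Nat.div_add_mod x (2 * a)
      exact ⟨x / (2 * a), by omega⟩
    · obtain ⟨q, hq⟩ := Nat.dvd_of_mod_eq_zero h
      have hq0 : q ≠ 0 := by rintro rfl; omega
      have : 2 * a * (q - 1) + 2 * a = 2 * a * q := by
        rw [← Nat.mul_succ, Nat.succ_eq_add_one, Nat.sub_add_cancel (Nat.pos_of_ne_zero hq0)]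
      exact ⟨q - 1, by omega⟩
  · rintro ⟨c, rfl⟩
    left
    rw [Nat.add_mul_mod_self_left]

theorem stmt9_general (n d : ℕ) (hodd : Odd d) :
    Nat.card {l : List ℕ // IsPartition l ∧ perimeter l = n ∧
        ∀ x ∈ l, x % (d + 3) = ((d + 3) / 2) % (d + 3) ∨ (x + (d + 3) / 2) % (d + 3) = 0}
      ≤ Nat.card {l : List ℕ // IsPartition l ∧ perimeter l = n ∧ DDistinct d l ∧
          ∀ x ∈ l, (d + 3) / 2 ≤ x} := by
  obtain ⟨k, rfl⟩ := hodd
  have ha : (2 * k + 1 + 3) / 2 = k + 2 := by omega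
  have hm : 2 * k + 1 + 3 = 2 * (k + 2) := by ring
  rw [ha, hm]
  calc _ = Nat.card {l : List ℕ // IsPartition l ∧ perimeter l = n ∧
          ∀ x ∈ l, ∃ c, x = (k + 2) + 2 * (k + 2) * c} :=
        Nat.card_congr <| Equiv.subtypeEquivRight fun l => by
          simp only [mod_two_mul_eq_or_add_mod_eq_zero_iff (Nat.succ_pos (k + 1))]
    _ ≤ _ := card_le_card_dDistinct (by omega) (by omega)

theorem stmt9 (n d : ℕ) (hn : 0 < n) (hd : 0 < d) (hodd : Odd d) :
    Nat.card {l : List ℕ // IsPartition l ∧ perimeter l = n ∧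
        ∀ x ∈ l, x % (d + 3) = ((d + 3) / 2) % (d + 3) ∨ (x + (d + 3) / 2) % (d + 3) = 0}
      ≤ Nat.card {l : List ℕ // IsPartition l ∧ perimeter l = n ∧ DDistinct d l ∧
          ∀ x ∈ l, (d + 3) / 2 ≤ x} :=
  stmt9_general n d hodd
end
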